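/- Let V and W be rational representations of G, and let v ∈ V∖{0} and w ∈ W∖{0}. Then (v, w) is uniformly K-stable if and only if there exists a positive integer m such that for every σ ∈ G one has the Minkowski-sum inclusion (1 − 1/m)·N(ρ_V(σ)v) + (1/m)·deg(V)·N(I) ⊆ N(ρ_W(σ)w) in ℝ^N. -/

import Mathlib

open Filter Topology Matrix Set Pointwise

noncomputable section

/-- Quotient topology on the projectivization of a topological vector space. -/
instance projTop (K V : Type*) [DivisionRing K] [AddCommGroup V] [Module K V]
    [TopologicalSpace V] : TopologicalSpace (Projectivization K V) :=
  inferInstanceAs (TopologicalSpace (Quotient (projectivizationSetoid K V)))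

/-- The group `G = SL(N+1, ℂ)`. -/
abbrev SL (N : ℕ) := Matrix.SpecialLinearGroup (Fin (N + 1)) ℂ

/-- A representation `ρ` of `SL(N+1,ℂ)` is rational if every matrix coefficient
`σ ↦ α (ρ σ v)` is a polynomial function of the entries of `σ`. -/
def IsRational {N : ℕ} {V : Type*} [AddCommGroup V] [Module ℂ V]
    (ρ : SL N →* (V ≃ₗ[ℂ] V)) : Prop :=
  ∀ (α : V →ₗ[ℂ] ℂ) (v : V), ∃ p : MvPolynomial (Fin (N + 1) × Fin (N + 1)) ℂ,
    ∀ σ : SL N, α (ρ σ v) =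
      MvPolynomial.eval (fun ij => (σ : Matrix (Fin (N + 1)) (Fin (N + 1)) ℂ) ij.1 ij.2) p

/-- A homomorphism `ℂ* → SL(N+1,ℂ)` is a one-parameter subgroup if each matrix
entry is a Laurent polynomial in `t`. -/
def IsOneParam {N : ℕ} (lam : ℂˣ →* SL N) : Prop :=
  ∀ i j : Fin (N + 1), ∃ c : ℤ →₀ ℂ, ∀ t : ℂˣ,
    ((lam t : Matrix (Fin (N + 1)) (Fin (N + 1)) ℂ)) i j = ∑ n ∈ c.support, c n * (t : ℂ) ^ n

/-- The filter of punctured neighborhoods of `0 ∈ ℂ`, pulled back to `ℂˣ`: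
"`t → 0`, `t ∈ ℂ*`". -/
def zeroFilter : Filter ℂˣ := comap Units.val (𝓝[≠] (0 : ℂ))

/-- `w` is a weight of `v` w.r.t. the one-parameter family `lam`:
`t^{-w} • ρ(lam t) v` has a nonzero limit as `t → 0`. -/
def HasWeight {N : ℕ} {V : Type*} [NormedAddCommGroup V] [NormedSpace ℂ V]
    (ρ : SL N →* (V ≃ₗ[ℂ] V)) (lam : ℂˣ → SL N) (v : V) (w : ℤ) : Prop :=
  ∃ v₀ : V, v₀ ≠ 0 ∧
    Tendsto (fun t : ℂˣ => ((t : ℂ) ^ (-w)) • (ρ (lam t) v)) zeroFilter (𝓝 v₀)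

/-- `w` is the weight of the identity matrix `I ∈ gl(N+1,ℂ)` w.r.t. `lam`, for the
representation of `SL(N+1,ℂ)` on `gl(N+1,ℂ)` given by left multiplication
(so `ρ(σ) I = σ`). -/
def HasWeightI {N : ℕ} (lam : ℂˣ → SL N) (w : ℤ) : Prop :=
  ∃ M₀ : Matrix (Fin (N + 1)) (Fin (N + 1)) ℂ, M₀ ≠ 0 ∧
    Tendsto (fun t : ℂˣ => ((t : ℂ) ^ (-w)) • ((lam t : Matrix (Fin (N + 1)) (Fin (N + 1)) ℂ)))
      zeroFilter (𝓝 M₀)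

/-- K-semistability of a pair `(v, w)`: `w_λ(w) ≤ w_λ(v)` for all one-parameter subgroups. -/
def KSemistable {N : ℕ} {V W : Type*} [NormedAddCommGroup V] [NormedSpace ℂ V]
    [NormedAddCommGroup W] [NormedSpace ℂ W]
    (ρV : SL N →* (V ≃ₗ[ℂ] V)) (ρW : SL N →* (W ≃ₗ[ℂ] W)) (v : V) (w : W) : Prop :=
  ∀ lam : ℂˣ →* SL N, IsOneParam lam →
    ∀ a b : ℤ, HasWeight ρW (fun t => lam t) w a → HasWeight ρV (fun t => lam t) v b → a ≤ b

/-- `q = deg(V)`: the least positive integer `q` with `q·w_λ(I) ≤ w_λ(u)` for all `u ≠ 0`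
and all one-parameter subgroups `λ`. -/
def IsDeg {N : ℕ} {V : Type*} [NormedAddCommGroup V] [NormedSpace ℂ V]
    (ρV : SL N →* (V ≃ₗ[ℂ] V)) (q : ℕ) : Prop :=
  IsLeast {k : ℕ | 0 < k ∧ ∀ lam : ℂˣ →* SL N, IsOneParam lam →
    ∀ u : V, u ≠ 0 → ∀ wI wu : ℤ, HasWeightI (fun t => lam t) wI →
      HasWeight ρV (fun t => lam t) u wu → (k : ℤ) * wI ≤ wu} q

/-- K-stability of a pair `(v, w)`, where `q = deg(V)`. -/
def KStable {N : ℕ} {V W : Type*} [NormedAddCommGroup V] [NormedSpace ℂ V]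
    [NormedAddCommGroup W] [NormedSpace ℂ W]
    (ρV : SL N →* (V ≃ₗ[ℂ] V)) (ρW : SL N →* (W ≃ₗ[ℂ] W)) (v : V) (w : W) (q : ℕ) : Prop :=
  KSemistable ρV ρW v w ∧
  ∀ lam : ℂˣ →* SL N, IsOneParam lam → ∀ wI wv ww : ℤ,
    HasWeightI (fun t => lam t) wI → HasWeight ρV (fun t => lam t) v wv →
    HasWeight ρW (fun t => lam t) w ww → (q : ℤ) * wI < wv → ww < wv

/-- Uniform K-stability of a pair `(v, w)`, where `q = deg(V)`:
`m (w_λ(v) − w_λ(w)) ≥ w_λ(v) − q·w_λ(I)` for some `m > 0` and all `λ`. -/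
def KUniform {N : ℕ} {V W : Type*} [NormedAddCommGroup V] [NormedSpace ℂ V]
    [NormedAddCommGroup W] [NormedSpace ℂ W]
    (ρV : SL N →* (V ≃ₗ[ℂ] V)) (ρW : SL N →* (W ≃ₗ[ℂ] W)) (v : V) (w : W) (q : ℕ) : Prop :=
  ∃ m : ℕ, 0 < m ∧ ∀ lam : ℂˣ →* SL N, IsOneParam lam → ∀ wI wv ww : ℤ,
    HasWeightI (fun t => lam t) wI → HasWeight ρV (fun t => lam t) v wv →
    HasWeight ρW (fun t => lam t) w ww →
    (m : ℤ) * (wv - ww) ≥ wv - (q : ℤ) * wI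

/-- The element `diag(t₁, …, t_N, (t₁⋯t_N)⁻¹)` of the diagonal maximal torus of `SL(N+1,ℂ)`. -/
def torusElem (N : ℕ) (t : Fin N → ℂˣ) : SL N :=
  ⟨Matrix.diagonal (Fin.snoc (fun i => (t i : ℂ)) ((∏ i, (t i : ℂ))⁻¹)), by
    rw [Matrix.det_diagonal, Fin.prod_univ_castSucc]
    simp only [Fin.snoc_castSucc, Fin.snoc_last]
    exact mul_inv_cancel₀ (Finset.prod_ne_zero_iff.mpr fun i _ => (t i).ne_zero)⟩

/-- `A(u)`: the set of torus weights appearing in `u`, given the weight space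
projections `π` and the weight set `A`. -/
def wtSupp {N : ℕ} {V : Type*} [AddCommGroup V] [Module ℂ V] (A : Finset (Fin N → ℤ))
    (π : (Fin N → ℤ) → (V →ₗ[ℂ] V)) (u : V) : Set (Fin N → ℤ) :=
  {a | a ∈ A ∧ π a u ≠ 0}

/-- The weight polytope `N(u) ⊆ ℝ^N`: the convex hull of `A(u)`. -/
def wtPolytope {N : ℕ} {V : Type*} [AddCommGroup V] [Module ℂ V] (A : Finset (Fin N → ℤ))
    (π : (Fin N → ℤ) → (V →ₗ[ℂ] V)) (u : V) : Set (Fin N → ℝ) :=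
  convexHull ℝ ((fun a : Fin N → ℤ => fun i => (a i : ℝ)) '' wtSupp A π u)

/-- `N(I) = conv{e₁, …, e_N, −(e₁+⋯+e_N)} ⊆ ℝ^N`, the weight polytope of the identity
matrix for the left multiplication action on `gl(N+1,ℂ)`. -/
def simplexNI (N : ℕ) : Set (Fin N → ℝ) :=
  convexHull ℝ (insert (fun _ => (-1 : ℝ)) (Set.range fun i : Fin N => Pi.single i (1 : ℝ)))

/-- `(A, π)` is a weight decomposition of the representation `ρ` with respect to the
diagonal maximal torus of `SL(N+1,ℂ)`. -/
def IsWtDecomp {N : ℕ} {V : Type*} [NormedAddCommGroup V] [NormedSpace ℂ V]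
    (ρ : SL N →* (V ≃ₗ[ℂ] V)) (A : Finset (Fin N → ℤ))
    (π : (Fin N → ℤ) → (V →ₗ[ℂ] V)) : Prop :=
  (∀ u : V, ∑ a ∈ A, π a u = u) ∧
  ∀ a ∈ A, ∀ (t : Fin N → ℂˣ) (u : V),
    ρ (torusElem N t) (π a u) = (∏ i, (t i : ℂ) ^ (a i)) • π a u

/-- `(A, π)` is a weight decomposition of a linear action `ρ` of the torus `(ℂ*)^N`. -/
def IsWtDecompT {N : ℕ} {V : Type*} [AddCommGroup V] [Module ℂ V]
    (ρ : (Fin N → ℂˣ) →* (V ≃ₗ[ℂ] V)) (A : Finset (Fin N → ℤ))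
    (π : (Fin N → ℤ) → (V →ₗ[ℂ] V)) : Prop :=
  (∀ u : V, ∑ a ∈ A, π a u = u) ∧
  ∀ a ∈ A, ∀ (t : Fin N → ℂˣ) (u : V), ρ t (π a u) = (∏ i, (t i : ℂ) ^ (a i)) • π a u

/-- The torus weight `w_{λ_ℓ}(u) = min { ⟨ℓ, a⟩ : a ∈ A(u) }`. -/
def wtT {N : ℕ} {V : Type*} [AddCommGroup V] [Module ℂ V] (A : Finset (Fin N → ℤ))
    (π : (Fin N → ℤ) → (V →ₗ[ℂ] V)) (ℓ : Fin N → ℤ) (u : V) : ℤ :=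
  sInf ((fun a : Fin N → ℤ => ∑ i, ℓ i * a i) '' wtSupp A π u)

/-- `w_{λ_ℓ}(I) = min {ℓ₁, …, ℓ_N, −(ℓ₁+⋯+ℓ_N)}`. -/
def wIT {N : ℕ} (ℓ : Fin N → ℤ) : ℤ := sInf (insert (-(∑ i, ℓ i)) (Set.range ℓ))

/-- The support function of a set `P ⊆ ℝ^N`. -/
def suppFn {N : ℕ} (P : Set (Fin N → ℝ)) (x : Fin N → ℝ) : ℝ :=
  sSup ((fun y => ∑ i, x i * y i) '' P)

/-- The squared Hilbert–Schmidt norm of `σ ∈ SL(N+1,ℂ) ⊆ gl(N+1,ℂ)`. -/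
def hsNormSq {N : ℕ} (σ : SL N) : ℝ :=
  ∑ i, ∑ j, ‖(σ : Matrix (Fin (N + 1)) (Fin (N + 1)) ℂ) i j‖ ^ 2

/-- Paul's functional `p_{v,w}(σ) = log‖ρ_W(σ)w‖² − log‖ρ_V(σ)v‖²`. -/
def pFun {N : ℕ} {V W : Type*} [NormedAddCommGroup V] [InnerProductSpace ℂ V]
    [NormedAddCommGroup W] [InnerProductSpace ℂ W]
    (ρV : SL N →* (V ≃ₗ[ℂ] V)) (ρW : SL N →* (W ≃ₗ[ℂ] W)) (v : V) (w : W) (σ : SL N) : ℝ :=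
  Real.log (‖ρW σ w‖ ^ 2) - Real.log (‖ρV σ v‖ ^ 2)

/-!
A one-parameter subgroup `λ` of `SL(N+1, ℂ)` is a Laurent polynomial `∑ tᵏ Fₖ`; comparing
coefficients in `λ(st) = λ(s) λ(t)` shows that the `Fₖ` are complete orthogonal idempotents, so
`λ = σ⁻¹ diag(t^ℓ₁, …, t^ℓ_N, t^-(ℓ₁ + ⋯ + ℓ_N)) σ` for some `σ` and integral `ℓ`. Along such a
subgroup the weight of `v` is `min {⟨ℓ, a⟩ : a ∈ A(σ v)}` and that of `I` is `min ⟨ℓ, N(I)⟩`.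
Hence uniform K-stability says `m (w_ℓ(σv) - w_ℓ(σw)) ≥ w_ℓ(σv) - q w_ℓ(I)` for all `σ` and all
integral `ℓ`, which is the support-function form of the polytope inclusion: a point lies in a
polytope with integral vertices iff no integral functional separates it from them, and a real
separating functional becomes integral after scaling it up and rounding.
-/

instance zeroFilter_neBot : zeroFilter.NeBot := by
  refine comap_neBot fun s hs ↦ ?_
  obtain ⟨z, hzs, hz⟩ :=
    Filter.nonempty_of_mem (inter_mem hs (self_mem_nhdsWithin : {0}ᶜ ∈ 𝓝[≠] (0 : ℂ)))
  exact ⟨Units.mk0 z hz, hzs⟩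

lemma tendsto_zpow_zeroFilter {k : ℤ} (hk : 0 < k) :
    Tendsto (fun t : ℂˣ ↦ (t : ℂ) ^ k) zeroFilter (𝓝 0) := by
  lift k to ℕ using hk.le
  have hval : Tendsto (Units.val : ℂˣ → ℂ) zeroFilter (𝓝 0) :=
    tendsto_comap.mono_right nhdsWithin_le_nhds
  simpa [Function.comp_def] using
    ((continuous_pow k).tendsto' (0 : ℂ) 0 (zero_pow (by omega))).comp hval

lemma tendsto_zpow_sub_zeroFilter {k w : ℤ} (hwk : w ≤ k) :
    Tendsto (fun t : ℂˣ ↦ (t : ℂ) ^ (k - w)) zeroFilter (𝓝 (if k = w then 1 else 0)) := by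
  split_ifs with h
  · simp [h]
  · exact tendsto_zpow_zeroFilter (by omega)

section LaurentLimits

variable {E : Type*} [AddCommGroup E] [Module ℂ E] [TopologicalSpace E] [ContinuousSMul ℂ E]

lemma eq_zero_of_tendsto_zpow_smul [T2Space E] {f : ℂˣ → E} {w w' : ℤ} (hww' : w < w')
    {a b : E} (ha : Tendsto (fun t : ℂˣ ↦ (t : ℂ) ^ (-w) • f t) zeroFilter (𝓝 a))
    (hb : Tendsto (fun t : ℂˣ ↦ (t : ℂ) ^ (-w') • f t) zeroFilter (𝓝 b)) : a = 0 := by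
  have h := (tendsto_zpow_zeroFilter (sub_pos.2 hww')).smul hb
  rw [zero_smul] at h
  refine tendsto_nhds_unique ha (h.congr fun t ↦ ?_)
  rw [smul_smul, ← zpow_add₀ t.ne_zero]
  ring_nf

lemma eq_of_tendsto_zpow_smul [T2Space E] {f : ℂˣ → E} {w w' : ℤ} {a b : E} (ha0 : a ≠ 0)
    (hb0 : b ≠ 0) (ha : Tendsto (fun t : ℂˣ ↦ (t : ℂ) ^ (-w) • f t) zeroFilter (𝓝 a))
    (hb : Tendsto (fun t : ℂˣ ↦ (t : ℂ) ^ (-w') • f t) zeroFilter (𝓝 b)) : w = w' := by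
  rcases lt_trichotomy w w' with h | h | h
  · exact absurd (eq_zero_of_tendsto_zpow_smul h ha hb) ha0
  · exact h
  · exact absurd (eq_zero_of_tendsto_zpow_smul h hb ha) hb0

lemma tendsto_zpow_smul_sum [ContinuousAdd E] {ι : Type*} (s : Finset ι) (e : ι → ℤ) (x : ι → E)
    {w : ℤ} (hw : ∀ i ∈ s, w ≤ e i) :
    Tendsto (fun t : ℂˣ ↦ (t : ℂ) ^ (-w) • ∑ i ∈ s, (t : ℂ) ^ e i • x i) zeroFilter
      (𝓝 (∑ i ∈ s with e i = w, x i)) := by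
  classical
  have h := tendsto_finsetSum s fun i hi ↦ (tendsto_zpow_sub_zeroFilter (hw i hi)).smul_const (x i)
  rw [Finset.sum_filter]
  simp only [ite_smul, one_smul, zero_smul] at h
  refine h.congr fun t ↦ ?_
  rw [Finset.smul_sum]
  refine Finset.sum_congr rfl fun i _ ↦ ?_
  rw [smul_smul, ← zpow_add₀ t.ne_zero, neg_add_eq_sub]

end LaurentLimits

lemma HasWeight.unique {N : ℕ} {V : Type*} [NormedAddCommGroup V] [NormedSpace ℂ V]
    {ρ : SL N →* (V ≃ₗ[ℂ] V)} {lam : ℂˣ → SL N} {u : V} {w w' : ℤ}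
    (h : HasWeight ρ lam u w) (h' : HasWeight ρ lam u w') : w = w' :=
  let ⟨_, ha0, ha⟩ := h
  let ⟨_, hb0, hb⟩ := h'
  eq_of_tendsto_zpow_smul ha0 hb0 ha hb

lemma HasWeightI.unique {N : ℕ} {lam : ℂˣ → SL N} {w w' : ℤ}
    (h : HasWeightI lam w) (h' : HasWeightI lam w') : w = w' :=
  let ⟨_, ha0, ha⟩ := h
  let ⟨_, hb0, hb⟩ := h'
  eq_of_tendsto_zpow_smul ha0 hb0 ha hb

lemma zpow_sum_eq_prod {G₀ ι : Type*} [CommGroupWithZero G₀] (s : Finset ι) (f : ι → ℤ) {x : G₀}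
    (hx : x ≠ 0) : x ^ (∑ i ∈ s, f i) = ∏ i ∈ s, x ^ f i := by
  classical
  induction s using Finset.induction_on with
  | empty => simp
  | insert i s hi ih => rw [Finset.sum_insert hi, Finset.prod_insert hi, zpow_add₀ hx, ih]

lemma eq_zero_of_sum_char_smul_eq_zero {G ι K E : Type*} [Monoid G] [Field K] [AddCommGroup E]
    [Module K E] {χ : ι → G →* K} (hχ : Function.Injective χ) {s : Finset ι} {x : ι → E}
    (h : ∀ g, ∑ i ∈ s, χ i g • x i = 0) : ∀ i ∈ s, x i = 0 := by
  intro i hi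
  refine (Module.forall_dual_apply_eq_zero_iff K (x i)).1 fun φ ↦ ?_
  refine linearIndependent_iff'.1 ((linearIndependent_monoidHom G K).comp χ hχ) s
    (fun i ↦ φ (x i)) (funext fun g ↦ ?_) i hi
  simpa [Finset.sum_apply, mul_comm] using congrArg φ (h g)

lemma two_zpow_injective : Function.Injective fun k : ℤ ↦ (2 : ℂ) ^ k := by
  intro k l hkl
  have h : (((2 : ℝ) ^ k : ℝ) : ℂ) = (((2 : ℝ) ^ l : ℝ) : ℂ) := by push_cast; exact hkl
  exact zpow_right_injective₀ (a := (2 : ℝ)) (by norm_num) (by norm_num)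
    (Complex.ofReal_injective h)

def torusChar {n : ℕ} (a : Fin n → ℤ) : (Fin n → ℂˣ) →* ℂ where
  toFun s := ∏ i, (s i : ℂ) ^ a i
  map_one' := by simp
  map_mul' s t := by simp [mul_zpow, Finset.prod_mul_distrib]

lemma torusChar_apply {n : ℕ} (a : Fin n → ℤ) (s : Fin n → ℂˣ) :
    torusChar a s = ∏ i, (s i : ℂ) ^ a i := rfl

lemma torusChar_injective {n : ℕ} : Function.Injective (torusChar (n := n)) := by
  intro a b hab
  funext i
  have hsingle (c : Fin n → ℤ) : torusChar c (Pi.mulSingle i (Units.mk0 2 two_ne_zero)) =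
      (2 : ℂ) ^ c i := by
    rw [torusChar_apply, Finset.prod_eq_single i (fun j _ hj ↦ by simp [hj]) (by simp)]
    simp
  exact two_zpow_injective (show (2 : ℂ) ^ a i = 2 ^ b i by rw [← hsingle, ← hsingle, hab])

lemma eq_zero_of_laurent_eq_zero {E : Type*} [AddCommGroup E] [Module ℂ E] {S : Finset ℤ}
    {x : ℤ → E} (h : ∀ t : ℂˣ, ∑ k ∈ S, (t : ℂ) ^ k • x k = 0) : ∀ k ∈ S, x k = 0 :=
  eq_zero_of_sum_char_smul_eq_zero (χ := fun k ↦ torusChar fun _ : Fin 1 ↦ k)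
    (fun k l hkl ↦ congrFun (torusChar_injective hkl) 0)
    fun g ↦ by simpa [torusChar_apply] using h (g 0)

lemma completeOrthogonalIdempotents_of_laurent {A : Type*} [Ring A] [Algebra ℂ A]
    {g : ℂˣ →* A} {S : Finset ℤ} {F : ℤ → A} (hg : ∀ t, g t = ∑ k ∈ S, (t : ℂ) ^ k • F k) :
    CompleteOrthogonalIdempotents fun k : S ↦ F k := by
  classical
  have hleft (s : ℂˣ) : ∀ l ∈ S, g s * F l = (s : ℂ) ^ l • F l := by
    refine fun l hl ↦ sub_eq_zero.1 <|
      eq_zero_of_laurent_eq_zero (x := fun l ↦ g s * F l - (s : ℂ) ^ l • F l) (fun t ↦ ?_) l hl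
    have hgs : ∑ k ∈ S, (t : ℂ) ^ k • (g s * F k) = g s * g t := by
      simp_rw [hg t, Finset.mul_sum, mul_smul_comm]
    have hgst : ∑ k ∈ S, (t : ℂ) ^ k • (s : ℂ) ^ k • F k = g (s * t) := by
      simp_rw [hg (s * t), Units.val_mul, mul_zpow, smul_smul, mul_comm]
    simp_rw [smul_sub, Finset.sum_sub_distrib, hgs, hgst, map_mul, sub_self]
  have hmul : ∀ k ∈ S, ∀ l ∈ S, F k * F l = if k = l then F l else 0 := by
    refine fun k hk l hl ↦ sub_eq_zero.1 <| eq_zero_of_laurent_eq_zero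
      (x := fun k ↦ F k * F l - if k = l then F l else 0) (fun s ↦ ?_) k hk
    have hgs : ∑ k ∈ S, (s : ℂ) ^ k • (F k * F l) = g s * F l := by
      simp_rw [hg s, Finset.sum_mul, smul_mul_assoc]
    have hdiag : ∑ k ∈ S, (s : ℂ) ^ k • (if k = l then F l else 0) = (s : ℂ) ^ l • F l := by
      simp [smul_ite, hl]
    simp_rw [smul_sub, Finset.sum_sub_distrib, hgs, hdiag, hleft s l hl, sub_self]
  refine ⟨OrthogonalIdempotents.iff_mul_eq.2 fun k l ↦ ?_, ?_⟩
  · rw [hmul k k.2 l l.2]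
    rcases eq_or_ne k l with rfl | h
    · simp
    · rw [if_neg h, if_neg (Subtype.coe_injective.ne h)]
  · rw [Finset.sum_coe_sort S F, ← map_one g, hg]
    simp

lemma CompleteOrthogonalIdempotents.exists_basis_apply_eq_ite {K V ι κ : Type*} [Field K]
    [AddCommGroup V] [Module K V] [Fintype ι] [DecidableEq ι] {f : ι → Module.End K V}
    (hf : CompleteOrthogonalIdempotents f) (b₀ : Module.Basis κ K V) :
    ∃ (b : Module.Basis κ K V) (e : κ → ι), ∀ j i, f i (b j) = if e j = i then b j else 0 := by
  set W : ι → Submodule K V := fun i ↦ LinearMap.range (f i)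
  have hW : ∀ j, ∀ x ∈ W j, ∀ i, f i x = if j = i then x else 0 := by
    rintro j _ ⟨y, rfl⟩ i
    rw [← Module.End.mul_apply, hf.mul_eq]
    rcases eq_or_ne i j with rfl | h
    · simp
    · simp [h, h.symm]
  have hindep : iSupIndep W := fun i ↦ by
    refine Submodule.disjoint_def.2 fun x hx hx' ↦ ?_
    have hker : ⨆ (j) (_ : j ≠ i), W j ≤ LinearMap.ker (f i) :=
      iSup₂_le fun j hj y hy ↦ by simp [hW j y hy i, hj]
    rw [← (by simpa using hW i x hx i : f i x = x)]
    exact LinearMap.mem_ker.1 (hker hx')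
  have htop : iSup W = ⊤ := eq_top_iff.2 fun x _ ↦ by
    have hx : ∑ i, f i x = x := by
      simpa [LinearMap.sum_apply] using congrArg (· x) hf.complete
    rw [← hx]
    exact Submodule.sum_mem_iSup fun i ↦ LinearMap.mem_range_self _ _
  have hint := DirectSum.isInternal_submodule_of_iSupIndep_of_iSup_eq_top hindep htop
  let bW := hint.collectedBasis fun i ↦ Module.Basis.ofVectorSpace K (W i)
  refine ⟨bW.reindex (bW.indexEquiv b₀), fun j ↦ ((bW.indexEquiv b₀).symm j).1, fun j i ↦ ?_⟩
  rw [Module.Basis.reindex_apply]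
  exact hW _ _ (hint.collectedBasis_mem _ _) i

section OneParam

variable {N : ℕ}

def diagExp (ℓ : Fin N → ℤ) : Fin (N + 1) → ℤ := Fin.snoc ℓ (-∑ i, ℓ i)

lemma diagExp_castSucc (E : Fin (N + 1) → ℤ) (hE : ∑ j, E j = 0) :
    diagExp (fun i ↦ E i.castSucc) = E := by
  rw [Fin.sum_univ_castSucc] at hE
  funext j
  refine Fin.lastCases ?_ (fun i ↦ ?_) j
  · simp [diagExp]
    linarith
  · simp [diagExp]

lemma coe_torusElem_zpow (ℓ : Fin N → ℤ) (t : ℂˣ) :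
    (torusElem N (fun i ↦ t ^ ℓ i) : Matrix (Fin (N + 1)) (Fin (N + 1)) ℂ) =
      diagonal fun j ↦ (t : ℂ) ^ diagExp ℓ j := by
  refine congrArg diagonal (funext fun j ↦ Fin.lastCases ?_ (fun i ↦ ?_) j)
  · simp [diagExp, zpow_sum_eq_prod _ _ t.ne_zero, _root_.zpow_neg]
  · simp [diagExp]

def diagOneParam (ℓ : Fin N → ℤ) : ℂˣ →* SL N where
  toFun t := torusElem N fun i ↦ t ^ ℓ i
  map_one' := Subtype.ext <| by
    rw [coe_torusElem_zpow]
    simp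
  map_mul' s t := Subtype.ext <| by
    rw [Matrix.SpecialLinearGroup.coe_mul, coe_torusElem_zpow, coe_torusElem_zpow,
      coe_torusElem_zpow, diagonal_mul_diagonal]
    simp [mul_zpow]

lemma coe_diagOneParam (ℓ : Fin N → ℤ) (t : ℂˣ) :
    (diagOneParam ℓ t : Matrix (Fin (N + 1)) (Fin (N + 1)) ℂ) =
      diagonal fun j ↦ (t : ℂ) ^ diagExp ℓ j :=
  coe_torusElem_zpow ℓ t

-- Conjugating by `σ⁻¹` on the left makes the weights along it those of `σ v`.
def conjOneParam (σ : SL N) (ℓ : Fin N → ℤ) : ℂˣ →* SL N :=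
  (MulAut.conj σ⁻¹).toMonoidHom.comp (diagOneParam ℓ)

lemma conjOneParam_apply (σ : SL N) (ℓ : Fin N → ℤ) (t : ℂˣ) :
    conjOneParam σ ℓ t = σ⁻¹ * diagOneParam ℓ t * σ := by
  simp [conjOneParam]

lemma exists_finsupp_laurent {ι : Type*} (s : Finset ι) (e : ι → ℤ) (a : ι → ℂ) :
    ∃ c : ℤ →₀ ℂ, ∀ t : ℂˣ, ∑ x ∈ s, a x * (t : ℂ) ^ e x = ∑ n ∈ c.support, c n * (t : ℂ) ^ n := by
  refine ⟨∑ x ∈ s, Finsupp.single (e x) (a x), fun t ↦ ?_⟩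
  change _ = Finsupp.sum _ fun n b ↦ b * (t : ℂ) ^ n
  rw [← Finsupp.sum_finsetSum_index (fun _ ↦ zero_mul _) (fun _ _ _ ↦ add_mul _ _ _)]
  simp

lemma isOneParam_conjOneParam (σ : SL N) (ℓ : Fin N → ℤ) : IsOneParam (conjOneParam σ ℓ) := by
  intro i j
  obtain ⟨c, hc⟩ := exists_finsupp_laurent Finset.univ (diagExp ℓ)
    fun x ↦ ((σ⁻¹ : SL N) : Matrix (Fin (N + 1)) (Fin (N + 1)) ℂ) i x * (σ : Matrix _ _ ℂ) x j
  refine ⟨c, fun t ↦ ?_⟩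
  rw [← hc, conjOneParam_apply, Matrix.SpecialLinearGroup.coe_mul,
    Matrix.SpecialLinearGroup.coe_mul, coe_diagOneParam, mul_apply]
  simp only [mul_diagonal]
  exact Finset.sum_congr rfl fun x _ ↦ by ring

lemma IsOneParam.exists_laurent {lam : ℂˣ →* SL N} (hlam : IsOneParam lam) :
    ∃ (S : Finset ℤ) (F : ℤ → Matrix (Fin (N + 1)) (Fin (N + 1)) ℂ),
      ∀ t : ℂˣ, (lam t : Matrix (Fin (N + 1)) (Fin (N + 1)) ℂ) = ∑ k ∈ S, (t : ℂ) ^ k • F k := by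
  classical
  choose c hc using hlam
  refine ⟨Finset.univ.biUnion fun i ↦ Finset.univ.biUnion fun j ↦ (c i j).support,
    fun k ↦ Matrix.of fun i j ↦ c i j k, fun t ↦ ?_⟩
  ext i j
  rw [hc i j t, Matrix.sum_apply]
  simp only [Matrix.smul_apply, of_apply, smul_eq_mul, mul_comm ((t : ℂ) ^ (_ : ℤ))]
  refine Finset.sum_subset (fun k hk ↦ ?_) (fun k _ hk ↦ by simp [Finsupp.notMem_support_iff.1 hk])
  simp only [Finset.mem_biUnion, Finset.mem_univ, true_and]
  exact ⟨i, j, hk⟩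

lemma IsOneParam.exists_mul_eq_mul_diagonal {lam : ℂˣ →* SL N} (hlam : IsOneParam lam) :
    ∃ (P : Matrix (Fin (N + 1)) (Fin (N + 1)) ℂ) (E : Fin (N + 1) → ℤ), IsUnit P.det ∧
      ∀ t : ℂˣ, (lam t : Matrix (Fin (N + 1)) (Fin (N + 1)) ℂ) * P =
        P * diagonal fun j ↦ (t : ℂ) ^ E j := by
  obtain ⟨S, F, hF⟩ := hlam.exists_laurent
  have hidem := completeOrthogonalIdempotents_of_laurent
    (g := (Units.coeHom _).comp (Matrix.SpecialLinearGroup.toGL.comp lam)) hF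
  obtain ⟨b, e, hb⟩ := (hidem.map (Matrix.toLinAlgEquiv' (R := ℂ)).toRingHom)
    |>.exists_basis_apply_eq_ite (Pi.basisFun ℂ (Fin (N + 1)))
  have heigen (t : ℂˣ) (j : Fin (N + 1)) :
      (lam t : Matrix (Fin (N + 1)) (Fin (N + 1)) ℂ) *ᵥ b j = (t : ℂ) ^ (e j : ℤ) • b j := by
    have hb' (k : S) : F k *ᵥ b j = if e j = k then b j else 0 := hb j k
    rw [hF, Matrix.sum_mulVec, ← Finset.sum_coe_sort S]
    simp [Matrix.smul_mulVec, hb', smul_ite]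
  refine ⟨(Pi.basisFun ℂ _).toMatrix b, fun j ↦ e j, ?_, fun t ↦ ?_⟩
  · rw [← Module.Basis.det_apply]
    exact Module.Basis.isUnit_det _ _
  · ext i j
    have := congrFun (heigen t j) i
    rw [mul_diagonal, mul_apply]
    simp only [Module.Basis.toMatrix_apply, Pi.basisFun_repr]
    simpa [mulVec, dotProduct, mul_comm] using this

lemma IsOneParam.exists_eq_conjOneParam {lam : ℂˣ →* SL N} (hlam : IsOneParam lam) :
    ∃ (σ : SL N) (ℓ : Fin N → ℤ), ∀ t, lam t = conjOneParam σ ℓ t := by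
  obtain ⟨P, E, hP, hPE⟩ := hlam.exists_mul_eq_mul_diagonal
  have hE : ∑ j, E j = 0 := by
    have h := congrArg det (hPE (Units.mk0 2 two_ne_zero))
    rw [det_mul, det_mul, Matrix.SpecialLinearGroup.det_coe, one_mul, det_diagonal] at h
    refine two_zpow_injective ?_
    simp only [Units.val_mk0, ← zpow_sum_eq_prod _ _ (two_ne_zero : (2 : ℂ) ≠ 0)] at h
    simpa using (mul_right_injective₀ hP.ne_zero (h.symm.trans (mul_one _).symm))
  obtain ⟨c, hc⟩ := IsAlgClosed.exists_pow_nat_eq P.det (Nat.succ_pos N)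
  let τ : SL N := ⟨c⁻¹ • P, by rw [det_smul, Fintype.card_fin, inv_pow, hc,
    inv_mul_cancel₀ hP.ne_zero]⟩
  refine ⟨τ⁻¹, fun i ↦ E i.castSucc, fun t ↦ ?_⟩
  rw [conjOneParam_apply, inv_inv, eq_mul_inv_iff_mul_eq]
  refine Subtype.ext ?_
  rw [Matrix.SpecialLinearGroup.coe_mul, Matrix.SpecialLinearGroup.coe_mul, coe_diagOneParam,
    diagExp_castSucc E hE]
  change _ * (c⁻¹ • P) = (c⁻¹ • P) * _
  rw [Matrix.mul_smul, hPE, Matrix.smul_mul]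

end OneParam

lemma isLeast_sInf_of_finite {s : Set ℤ} (hne : s.Nonempty) (hfin : s.Finite) :
    IsLeast s (sInf s) :=
  ⟨hne.csInf_mem hfin, fun _ h ↦ csInf_le hfin.bddBelow h⟩

section Weights

variable {N : ℕ} {V : Type*} [NormedAddCommGroup V] [NormedSpace ℂ V]
  {ρ : SL N →* (V ≃ₗ[ℂ] V)} {A : Finset (Fin N → ℤ)} {π : (Fin N → ℤ) → (V →ₗ[ℂ] V)}

lemma IsWtDecomp.apply_diagOneParam (hdec : IsWtDecomp ρ A π) (ℓ : Fin N → ℤ) (u : V)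
    (t : ℂˣ) : ρ (diagOneParam ℓ t) u = ∑ a ∈ A, (t : ℂ) ^ (∑ i, ℓ i * a i) • π a u := by
  conv_lhs => rw [← hdec.1 u, map_sum]
  refine Finset.sum_congr rfl fun a ha ↦ ?_
  rw [show diagOneParam ℓ t = torusElem N (fun i ↦ t ^ ℓ i) from rfl, hdec.2 a ha,
    zpow_sum_eq_prod _ _ t.ne_zero]
  simp [_root_.zpow_mul]

lemma IsWtDecomp.sum_ne_zero (hdec : IsWtDecomp ρ A π) {B : Finset (Fin N → ℤ)} (hB : B ⊆ A)
    {u : V} {a₀ : Fin N → ℤ} (ha₀ : a₀ ∈ B) (hu : π a₀ u ≠ 0) : ∑ a ∈ B, π a u ≠ 0 := by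
  intro h
  refine hu (eq_zero_of_sum_char_smul_eq_zero (x := fun a ↦ π a u) torusChar_injective
    (fun s ↦ ?_) a₀ ha₀)
  rw [← map_zero (ρ (torusElem N s)), ← h, map_sum]
  exact Finset.sum_congr rfl fun a ha ↦ (hdec.2 a (hB ha) s u).symm

lemma wtSupp_finite (A : Finset (Fin N → ℤ)) (π : (Fin N → ℤ) → (V →ₗ[ℂ] V)) (u : V) :
    (wtSupp A π u).Finite :=
  A.finite_toSet.subset fun _ h ↦ h.1

lemma IsWtDecomp.wtSupp_nonempty (hdec : IsWtDecomp ρ A π) {u : V} (hu : u ≠ 0) :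
    (wtSupp A π u).Nonempty := by
  obtain ⟨a, ha, hne⟩ := Finset.exists_ne_zero_of_sum_ne_zero (by rwa [hdec.1 u])
  exact ⟨a, ha, hne⟩

lemma IsWtDecomp.isLeast_wtT (hdec : IsWtDecomp ρ A π) (ℓ : Fin N → ℤ) {u : V} (hu : u ≠ 0) :
    IsLeast ((fun a ↦ ∑ i, ℓ i * a i) '' wtSupp A π u) (wtT A π ℓ u) :=
  isLeast_sInf_of_finite ((hdec.wtSupp_nonempty hu).image _) ((wtSupp_finite A π u).image _)

lemma IsWtDecomp.hasWeight_diagOneParam (hdec : IsWtDecomp ρ A π) (ℓ : Fin N → ℤ) {u : V}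
    (hu : u ≠ 0) : HasWeight ρ (fun t ↦ diagOneParam ℓ t) u (wtT A π ℓ u) := by
  classical
  set T := A.filter fun a ↦ π a u ≠ 0
  obtain ⟨⟨a₀, ⟨ha₀A, ha₀u⟩, ha₀⟩, hle⟩ := hdec.isLeast_wtT ℓ hu
  refine ⟨∑ a ∈ T with ∑ i, ℓ i * a i = wtT A π ℓ u, π a u,
    hdec.sum_ne_zero ((Finset.filter_subset _ _).trans (Finset.filter_subset _ _))
      (Finset.mem_filter.2 ⟨Finset.mem_filter.2 ⟨ha₀A, ha₀u⟩, ha₀⟩) ha₀u, ?_⟩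
  have hT (t : ℂˣ) : ρ (diagOneParam ℓ t) u = ∑ a ∈ T, (t : ℂ) ^ (∑ i, ℓ i * a i) • π a u := by
    rw [hdec.apply_diagOneParam, Finset.sum_filter_of_ne fun a _ h ↦ by
      contrapose! h
      simp [h]]
  simp_rw [hT]
  exact tendsto_zpow_smul_sum T _ _ fun a ha ↦
    hle ⟨a, Finset.mem_filter.1 ha, rfl⟩

lemma HasWeight.conj [FiniteDimensional ℂ V] {lam : ℂˣ → SL N} {u : V} {w : ℤ} (σ : SL N)
    (h : HasWeight ρ lam (ρ σ u) w) : HasWeight ρ (fun t ↦ σ⁻¹ * lam t * σ) u w := by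
  obtain ⟨v₀, hv₀, hlim⟩ := h
  refine ⟨ρ σ⁻¹ v₀, by simpa using hv₀, ?_⟩
  refine ((((ρ σ⁻¹ : V ≃ₗ[ℂ] V) : V →ₗ[ℂ] V).continuous_of_finiteDimensional.tendsto v₀).comp
    hlim).congr fun t ↦ ?_
  simp

lemma IsWtDecomp.hasWeight_conjOneParam [FiniteDimensional ℂ V] (hdec : IsWtDecomp ρ A π)
    (σ : SL N) (ℓ : Fin N → ℤ) {u : V} (hu : u ≠ 0) :
    HasWeight ρ (fun t ↦ conjOneParam σ ℓ t) u (wtT A π ℓ (ρ σ u)) := by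
  simp_rw [conjOneParam_apply]
  exact (hdec.hasWeight_diagOneParam ℓ (by simpa using hu)).conj σ

end Weights

section WeightI

variable {N : ℕ}

lemma isLeast_wIT (ℓ : Fin N → ℤ) : IsLeast (Set.range (diagExp ℓ)) (wIT ℓ) := by
  rw [diagExp, Fin.range_snoc]
  exact isLeast_sInf_of_finite (Set.insert_nonempty _ _) ((Set.finite_range ℓ).insert _)

lemma hasWeightI_diagOneParam (ℓ : Fin N → ℤ) :
    HasWeightI (fun t ↦ diagOneParam ℓ t) (wIT ℓ) := by
  obtain ⟨⟨j₀, hj₀⟩, hle⟩ := isLeast_wIT ℓ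
  refine ⟨diagonal fun j ↦ if diagExp ℓ j = wIT ℓ then 1 else 0, fun h ↦ ?_, ?_⟩
  · simpa [hj₀] using congrFun (congrFun h j₀) j₀
  · refine ((continuous_id.matrix_diagonal.tendsto _).comp (tendsto_pi_nhds.2 fun j ↦
      tendsto_zpow_sub_zeroFilter (hle ⟨j, rfl⟩))).congr fun t ↦ ?_
    rw [coe_diagOneParam, ← diagonal_smul]
    refine congrArg diagonal (funext fun j ↦ ?_)
    rw [Pi.smul_apply, smul_eq_mul, ← zpow_add₀ t.ne_zero, neg_add_eq_sub]
    rfl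

lemma HasWeightI.conj {lam : ℂˣ → SL N} {w : ℤ} (σ : SL N) (h : HasWeightI lam w) :
    HasWeightI (fun t ↦ σ⁻¹ * lam t * σ) w := by
  obtain ⟨M₀, hM₀, hlim⟩ := h
  set S : Matrix (Fin (N + 1)) (Fin (N + 1)) ℂ := ↑σ
  set S' : Matrix (Fin (N + 1)) (Fin (N + 1)) ℂ := ↑(σ⁻¹ : SL N)
  have hSS' : S * S' = 1 := by
    rw [← Matrix.SpecialLinearGroup.coe_mul, mul_inv_cancel, Matrix.SpecialLinearGroup.coe_one]
  refine ⟨S' * M₀ * S, fun h0 ↦ hM₀ ?_, ?_⟩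
  · calc M₀ = S * (S' * M₀ * S) * S' := by
          simp only [← Matrix.mul_assoc, hSS', Matrix.one_mul]
          rw [Matrix.mul_assoc, hSS', Matrix.mul_one]
      _ = 0 := by rw [h0, Matrix.mul_zero, Matrix.zero_mul]
  · have hc : Continuous fun M : Matrix (Fin (N + 1)) (Fin (N + 1)) ℂ ↦ S' * M * S :=
      (continuous_const.matrix_mul continuous_id).matrix_mul continuous_const
    refine ((hc.tendsto M₀).comp hlim).congr fun t ↦ ?_
    simp [S, S']

lemma hasWeightI_conjOneParam (σ : SL N) (ℓ : Fin N → ℤ) :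
    HasWeightI (fun t ↦ conjOneParam σ ℓ t) (wIT ℓ) := by
  simp_rw [conjOneParam_apply]
  exact (hasWeightI_diagOneParam ℓ).conj σ

end WeightI

lemma kUniform_iff_forall_wtT {N : ℕ} {V W : Type*}
    [NormedAddCommGroup V] [NormedSpace ℂ V] [FiniteDimensional ℂ V]
    [NormedAddCommGroup W] [NormedSpace ℂ W] [FiniteDimensional ℂ W]
    {ρV : SL N →* (V ≃ₗ[ℂ] V)} {ρW : SL N →* (W ≃ₗ[ℂ] W)}
    {AV : Finset (Fin N → ℤ)} {πV : (Fin N → ℤ) → (V →ₗ[ℂ] V)} (hV : IsWtDecomp ρV AV πV)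
    {AW : Finset (Fin N → ℤ)} {πW : (Fin N → ℤ) → (W →ₗ[ℂ] W)} (hW : IsWtDecomp ρW AW πW)
    {v : V} (hv : v ≠ 0) {w : W} (hw : w ≠ 0) (q : ℕ) :
    KUniform ρV ρW v w q ↔ ∃ m : ℕ, 0 < m ∧ ∀ (σ : SL N) (ℓ : Fin N → ℤ),
      (m : ℤ) * (wtT AV πV ℓ (ρV σ v) - wtT AW πW ℓ (ρW σ w)) ≥
        wtT AV πV ℓ (ρV σ v) - (q : ℤ) * wIT ℓ := by
  refine exists_congr fun m ↦ and_congr_right fun _ ↦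
    ⟨fun h σ ℓ ↦ h _ (isOneParam_conjOneParam σ ℓ) _ _ _ (hasWeightI_conjOneParam σ ℓ)
      (hV.hasWeight_conjOneParam σ ℓ hv) (hW.hasWeight_conjOneParam σ ℓ hw),
     fun h lam hlam wI wv ww hwI hwv hww ↦ ?_⟩
  obtain ⟨σ, ℓ, hσ⟩ := hlam.exists_eq_conjOneParam
  simp_rw [hσ] at hwI hwv hww
  rw [hwI.unique (hasWeightI_conjOneParam σ ℓ), hwv.unique (hV.hasWeight_conjOneParam σ ℓ hv),
    hww.unique (hW.hasWeight_conjOneParam σ ℓ hw)]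
  exact h σ ℓ

section IntegralSeparation

variable {N : ℕ}

lemma le_dotProduct_round (r : ℝ) (c y : Fin N → ℝ) :
    r * (c ⬝ᵥ y) - (∑ i, |y i|) / 2 ≤ (fun i ↦ (round (r * c i) : ℝ)) ⬝ᵥ y := by
  rw [dotProduct, dotProduct, Finset.mul_sum, Finset.sum_div, ← Finset.sum_sub_distrib]
  refine Finset.sum_le_sum fun i _ ↦ ?_
  have h := abs_sub_round (r * c i)
  calc r * (c i * y i) - |y i| / 2
      ≤ r * (c i * y i) - |r * c i - round (r * c i)| * |y i| := by
        nlinarith [abs_nonneg (y i)]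
    _ ≤ round (r * c i) * y i := by
        rw [← abs_mul]
        linarith [le_abs_self ((r * c i - round (r * c i)) * y i)]

lemma exists_int_dotProduct_lt {B : Set (Fin N → ℝ)} (hB : B.Finite) {c x : Fin N → ℝ}
    (hc : ∀ b ∈ B, c ⬝ᵥ x < c ⬝ᵥ b) :
    ∃ ℓ : Fin N → ℤ, ∀ b ∈ B, (fun i ↦ (ℓ i : ℝ)) ⬝ᵥ x < (fun i ↦ (ℓ i : ℝ)) ⬝ᵥ b := by
  have key : ∀ b ∈ B, ∀ᶠ n : ℕ in atTop,
      (fun i ↦ (round (n * c i) : ℝ)) ⬝ᵥ x < (fun i ↦ (round (n * c i) : ℝ)) ⬝ᵥ b := by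
    intro b hb
    have hpos : 0 < c ⬝ᵥ (b - x) := by rw [dotProduct_sub]; linarith [hc b hb]
    filter_upwards [(tendsto_natCast_atTop_atTop.atTop_mul_const hpos).eventually_gt_atTop
      ((∑ i, |(b - x) i|) / 2)] with n hn
    have h := le_dotProduct_round (n : ℝ) c (b - x)
    simp only [dotProduct_sub] at h hn
    linarith
  obtain ⟨n, hn⟩ := ((eventually_all_finite hB).2 key).exists
  exact ⟨fun i ↦ round (n * c i), by exact_mod_cast hn⟩

lemma exists_dotProduct_lt_of_notMem_convexHull {B : Set (Fin N → ℝ)} (hB : B.Finite)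
    {x : Fin N → ℝ} (hx : x ∉ convexHull ℝ B) : ∃ c : Fin N → ℝ, ∀ b ∈ B, c ⬝ᵥ x < c ⬝ᵥ b := by
  obtain ⟨f, u, hfx, hfB⟩ := geometric_hahn_banach_point_closed (convex_convexHull ℝ B)
    (hB.isClosed_convexHull ℝ) hx
  have hf (y : Fin N → ℝ) : f y = (fun i ↦ f (Pi.single i 1)) ⬝ᵥ y := by
    conv_lhs => rw [← Finset.univ_sum_single y]
    refine (map_sum f _ _).trans (Finset.sum_congr rfl fun i _ ↦ ?_)
    rw [mul_comm, ← smul_eq_mul, ← map_smul, ← Pi.single_smul, smul_eq_mul, mul_one]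
  exact ⟨_, fun b hb ↦ by
    rw [← hf, ← hf]; exact hfx.trans (hfB b (subset_convexHull ℝ B hb))⟩

lemma mem_convexHull_iff_forall_int {B : Set (Fin N → ℝ)} (hB : B.Finite) {x : Fin N → ℝ} :
    x ∈ convexHull ℝ B ↔
      ∀ ℓ : Fin N → ℤ, ∃ b ∈ B, (fun i ↦ (ℓ i : ℝ)) ⬝ᵥ b ≤ (fun i ↦ (ℓ i : ℝ)) ⬝ᵥ x := by
  refine ⟨fun hx ℓ ↦ ?_, fun h ↦ by_contra fun hx ↦ ?_⟩
  · by_contra! h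
    have hlin : IsLinearMap ℝ ((fun i ↦ (ℓ i : ℝ)) ⬝ᵥ ·) :=
      ⟨dotProduct_add _, fun r y ↦ dotProduct_smul r _ y⟩
    have hxx : (fun i ↦ (ℓ i : ℝ)) ⬝ᵥ x < (fun i ↦ (ℓ i : ℝ)) ⬝ᵥ x :=
      convexHull_min h (convex_halfSpace_gt hlin _) hx
    exact lt_irrefl _ hxx
  · obtain ⟨c, hc⟩ := exists_dotProduct_lt_of_notMem_convexHull hB hx
    obtain ⟨ℓ, hℓ⟩ := exists_int_dotProduct_lt hB hc
    obtain ⟨b, hb, hle⟩ := h ℓ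
    exact (hℓ b hb).not_ge hle

end IntegralSeparation

section Polytopes

variable {N : ℕ}

lemma smul_convexHull_add_smul_convexHull_subset_iff {A E B : Set (Fin N → ℝ)} (hB : B.Finite)
    {α β : ℝ} (hα : 0 ≤ α) (hβ : 0 ≤ β) {fA fE fB : (Fin N → ℤ) → ℝ}
    (hA : ∀ ℓ, IsLeast (((fun i ↦ (ℓ i : ℝ)) ⬝ᵥ ·) '' A) (fA ℓ))
    (hE : ∀ ℓ, IsLeast (((fun i ↦ (ℓ i : ℝ)) ⬝ᵥ ·) '' E) (fE ℓ))
    (hfB : ∀ ℓ, IsLeast (((fun i ↦ (ℓ i : ℝ)) ⬝ᵥ ·) '' B) (fB ℓ)) :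
    α • convexHull ℝ A + β • convexHull ℝ E ⊆ convexHull ℝ B ↔
      ∀ ℓ, fB ℓ ≤ α * fA ℓ + β * fE ℓ := by
  rw [← convexHull_smul, ← convexHull_smul, ← convexHull_add,
    (convex_convexHull ℝ B).convexHull_subset_iff, Set.add_subset_iff]
  constructor
  · intro h ℓ
    obtain ⟨⟨a, ha, hfa⟩, -⟩ := hA ℓ
    obtain ⟨⟨e, he, hfe⟩, -⟩ := hE ℓ
    obtain ⟨b, hb, hle⟩ := (mem_convexHull_iff_forall_int hB).1
      (h _ (Set.smul_mem_smul_set ha) _ (Set.smul_mem_smul_set he)) ℓ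
    rw [dotProduct_add, dotProduct_smul, dotProduct_smul, smul_eq_mul, smul_eq_mul] at hle
    rw [← hfa, ← hfe]
    exact ((hfB ℓ).2 ⟨b, hb, rfl⟩).trans hle
  · rintro h _ ⟨a, ha, rfl⟩ _ ⟨e, he, rfl⟩
    refine (mem_convexHull_iff_forall_int hB).2 fun ℓ ↦ ?_
    obtain ⟨⟨b, hb, hfb⟩, -⟩ := hfB ℓ
    refine ⟨b, hb, ?_⟩
    dsimp only at hfb ⊢
    rw [hfb, dotProduct_add, dotProduct_smul, dotProduct_smul, smul_eq_mul, smul_eq_mul]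
    exact (h ℓ).trans (add_le_add (mul_le_mul_of_nonneg_left ((hA ℓ).2 ⟨a, ha, rfl⟩) hα)
      (mul_le_mul_of_nonneg_left ((hE ℓ).2 ⟨e, he, rfl⟩) hβ))

lemma IsWtDecomp.isLeast_dotProduct_wtSupp {V : Type*} [NormedAddCommGroup V] [NormedSpace ℂ V]
    {ρ : SL N →* (V ≃ₗ[ℂ] V)} {A : Finset (Fin N → ℤ)} {π : (Fin N → ℤ) → (V →ₗ[ℂ] V)}
    (hdec : IsWtDecomp ρ A π) (ℓ : Fin N → ℤ) {u : V} (hu : u ≠ 0) :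
    IsLeast (((fun i ↦ (ℓ i : ℝ)) ⬝ᵥ ·) '' ((fun a : Fin N → ℤ ↦ fun i ↦ (a i : ℝ)) ''
      wtSupp A π u)) (wtT A π ℓ u) := by
  have himage : ((fun i ↦ (ℓ i : ℝ)) ⬝ᵥ ·) '' ((fun a : Fin N → ℤ ↦ fun i ↦ (a i : ℝ)) ''
      wtSupp A π u) = Int.cast '' ((fun a ↦ ∑ i, ℓ i * a i) '' wtSupp A π u) := by
    rw [Set.image_image, Set.image_image]
    simp [dotProduct]
  rw [himage]
  exact Int.cast_mono.map_isLeast (hdec.isLeast_wtT ℓ hu)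

lemma isLeast_dotProduct_simplexNI_vertices (ℓ : Fin N → ℤ) :
    IsLeast (((fun i ↦ (ℓ i : ℝ)) ⬝ᵥ ·) ''
      insert (fun _ ↦ (-1 : ℝ)) (Set.range fun i : Fin N ↦ Pi.single i (1 : ℝ))) (wIT ℓ) := by
  have himage : ((fun i ↦ (ℓ i : ℝ)) ⬝ᵥ ·) ''
      insert (fun _ ↦ (-1 : ℝ)) (Set.range fun i : Fin N ↦ Pi.single i (1 : ℝ)) =
      Int.cast '' Set.range (diagExp ℓ) := by
    rw [diagExp, Fin.range_snoc, Set.image_insert_eq, Set.image_insert_eq, ← Set.range_comp,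
      ← Set.range_comp]
    congr 1
    · simp [dotProduct]
    · congr 1
      funext i
      simp [dotProduct, Pi.single_apply]
  rw [himage]
  exact Int.cast_mono.map_isLeast (isLeast_wIT ℓ)

lemma smul_wtPolytope_add_smul_simplexNI_subset_iff {V W : Type*}
    [NormedAddCommGroup V] [NormedSpace ℂ V] [NormedAddCommGroup W] [NormedSpace ℂ W]
    {ρV : SL N →* (V ≃ₗ[ℂ] V)} {ρW : SL N →* (W ≃ₗ[ℂ] W)}
    {AV : Finset (Fin N → ℤ)} {πV : (Fin N → ℤ) → (V →ₗ[ℂ] V)} (hV : IsWtDecomp ρV AV πV)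
    {AW : Finset (Fin N → ℤ)} {πW : (Fin N → ℤ) → (W →ₗ[ℂ] W)} (hW : IsWtDecomp ρW AW πW)
    {u : V} (hu : u ≠ 0) {u' : W} (hu' : u' ≠ 0) {m : ℕ} (hm : 0 < m) (q : ℕ) :
    (1 - 1 / (m : ℝ)) • wtPolytope AV πV u + ((q : ℝ) / (m : ℝ)) • simplexNI N ⊆
        wtPolytope AW πW u' ↔
      ∀ ℓ, (m : ℤ) * (wtT AV πV ℓ u - wtT AW πW ℓ u') ≥ wtT AV πV ℓ u - (q : ℤ) * wIT ℓ := by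
  have hm' : (0 : ℝ) < m := by exact_mod_cast hm
  rw [wtPolytope, wtPolytope, simplexNI, smul_convexHull_add_smul_convexHull_subset_iff
    ((wtSupp_finite AW πW u').image _)
    (sub_nonneg.2 (div_le_one_of_le₀ (by exact_mod_cast hm) hm'.le)) (by positivity)
    (hV.isLeast_dotProduct_wtSupp · hu) isLeast_dotProduct_simplexNI_vertices
    (hW.isLeast_dotProduct_wtSupp · hu')]
  refine forall_congr' fun ℓ ↦ ?_
  rw [ge_iff_le, ← Int.cast_le (R := ℝ), ← mul_le_mul_iff_of_pos_left hm']
  push_cast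
  have hexp : (m : ℝ) * ((1 - 1 / m) * wtT AV πV ℓ u + q / m * wIT ℓ) =
      m * wtT AV πV ℓ u - wtT AV πV ℓ u + q * wIT ℓ := by
    field_simp
  rw [hexp]
  constructor <;> intro h <;> linarith

end Polytopes

theorem statement15_general (N : ℕ) {V W : Type}
    [NormedAddCommGroup V] [NormedSpace ℂ V] [FiniteDimensional ℂ V]
    [NormedAddCommGroup W] [NormedSpace ℂ W] [FiniteDimensional ℂ W]
    (ρV : SL N →* (V ≃ₗ[ℂ] V))
    (ρW : SL N →* (W ≃ₗ[ℂ] W))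
    (AV : Finset (Fin N → ℤ)) (πV : (Fin N → ℤ) → (V →ₗ[ℂ] V)) (hV : IsWtDecomp ρV AV πV)
    (AW : Finset (Fin N → ℤ)) (πW : (Fin N → ℤ) → (W →ₗ[ℂ] W)) (hW : IsWtDecomp ρW AW πW)
    (v : V) (hv : v ≠ 0) (w : W) (hw : w ≠ 0)
    (q : ℕ) :
    KUniform ρV ρW v w q ↔
      ∃ m : ℕ, 0 < m ∧ ∀ σ : SL N,
        (1 - 1 / (m : ℝ)) • wtPolytope AV πV (ρV σ v) +
            ((q : ℝ) / (m : ℝ)) • simplexNI N ⊆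
          wtPolytope AW πW (ρW σ w) := by
  rw [kUniform_iff_forall_wtT hV hW hv hw q]
  refine exists_congr fun m ↦ and_congr_right fun hm ↦ forall_congr' fun σ ↦ ?_
  exact (smul_wtPolytope_add_smul_simplexNI_subset_iff hV hW (by simpa using hv)
    (by simpa using hw) hm q).symm

/-- For nonzero `v ∈ V`, `w ∈ W` in rational representations of `G` with
torus weight decompositions, the pair `(v, w)` is uniformly K-stable if and only if there
is a positive integer `m` such that for every `σ ∈ G` one has the Minkowski-sum inclusion
`(1 − 1/m)·N(ρ_V(σ)v) + (1/m)·deg(V)·N(I) ⊆ N(ρ_W(σ)w)`. -/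
theorem statement15 (N : ℕ) (hN : 1 ≤ N) {V W : Type}
    [NormedAddCommGroup V] [NormedSpace ℂ V] [FiniteDimensional ℂ V]
    [NormedAddCommGroup W] [NormedSpace ℂ W] [FiniteDimensional ℂ W]
    (ρV : SL N →* (V ≃ₗ[ℂ] V)) (hρV : IsRational ρV)
    (ρW : SL N →* (W ≃ₗ[ℂ] W)) (hρW : IsRational ρW)
    (AV : Finset (Fin N → ℤ)) (πV : (Fin N → ℤ) → (V →ₗ[ℂ] V)) (hV : IsWtDecomp ρV AV πV)
    (AW : Finset (Fin N → ℤ)) (πW : (Fin N → ℤ) → (W →ₗ[ℂ] W)) (hW : IsWtDecomp ρW AW πW)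
    (v : V) (hv : v ≠ 0) (w : W) (hw : w ≠ 0)
    (q : ℕ) (hq : IsDeg ρV q) :
    KUniform ρV ρW v w q ↔
      ∃ m : ℕ, 0 < m ∧ ∀ σ : SL N,
        (1 - 1 / (m : ℝ)) • wtPolytope AV πV (ρV σ v) +
            ((q : ℝ) / (m : ℝ)) • simplexNI N ⊆
          wtPolytope AW πW (ρW σ w) :=
  statement15_general N ρV ρW AV πV hV AW πW hW v hv w hw q
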